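/- Under the standing blow-up assumptions, for every sequence ε_k → 0 such that Σ_k ⊂ B_{ε_k/2}(0), there exists a sequence l_k → 0 with l_k ≥ 2ε_k such that |ū_k(l_k)| + 2 log l_k → −∞ as k → ∞, where ū_k(r) = (1/(2πr)) ∫_{∂B_r} u_k is the spherical average of u_k over ∂B_r. -/

import Mathlib

/-!
With `g = h₁ e^u + h₂ e^{-u} ≥ C⁻¹ (e^u + e^{-u})`, Jensen's inequality on the circle of
radius `r` gives `∫_{∂B_r} g ≥ 2π r C⁻¹ e^{|ū(r)|}`. If `|ū(r)| + 2 log r ≥ B` for all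
`a < r < b`, integrating in polar coordinates gives `2π C⁻¹ e^B log (b / a) ≤ ∫_{B₁} g ≤ 2C`.
For `a = 2ε_k`, `b = √a` the factor `log (b / a)` tends to infinity, so some radius
`l_k ∈ (a, b)` has `|ū_k(l_k)| + 2 log l_k < log (const / log (b / a)) → -∞`.
-/

open MeasureTheory Metric Filter Set

noncomputable section

abbrev E2 := EuclideanSpace ℝ (Fin 2)

/-- The Laplacian of a function `u : ℝ² → ℝ`. -/
def lap (u : E2 → ℝ) (x : E2) : ℝ :=
  ∑ i : Fin 2, fderiv ℝ (fun y => fderiv ℝ u y (EuclideanSpace.single i 1)) x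
    (EuclideanSpace.single i 1)

/-- The point `(r cos θ, r sin θ)` on the circle of radius `r` centered at the origin. -/
def circ (r θ : ℝ) : E2 := (WithLp.equiv 2 (Fin 2 → ℝ)).symm ![r * Real.cos θ, r * Real.sin θ]

/-- Spherical average `ū(r) = (1/(2πr)) ∫_{∂B_r} u dσ`, via arc-length parametrization. -/
def sphAvg (f : E2 → ℝ) (r : ℝ) : ℝ :=
  (2 * Real.pi)⁻¹ * ∫ θ in (0:ℝ)..(2 * Real.pi), f (circ r θ)

/-- Local mass `σ₁ᵏ(r) = (1/(2π)) ∫_{B_r} h₁ᵏ e^{u_k}`. -/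
def mass1 (u h : ℕ → E2 → ℝ) (k : ℕ) (r : ℝ) : ℝ :=
  (2 * Real.pi)⁻¹ * ∫ x in ball (0:E2) r, h k x * Real.exp (u k x)

/-- Local mass `σ₂ᵏ(r) = (1/(2π)) ∫_{B_r} h₂ᵏ e^{-u_k}`. -/
def mass2 (u h : ℕ → E2 → ℝ) (k : ℕ) (r : ℝ) : ℝ :=
  (2 * Real.pi)⁻¹ * ∫ x in ball (0:E2) r, h k x * Real.exp (-(u k x))

/-- The standing blow-up assumptions for the sinh-Gordon equation in `B₁ ⊂ ℝ²`. -/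
def BlowUpSetup (u h₁ h₂ : ℕ → E2 → ℝ) : Prop :=
  (∀ k, ContDiffOn ℝ 2 (u k) (ball 0 1)) ∧
  (∀ k, ∀ x ∈ ball (0:E2) 1,
      lap (u k) x + h₁ k x * Real.exp (u k x) - h₂ k x * Real.exp (-(u k x)) = 0) ∧
  (∀ k, IntegrableOn (fun x => h₁ k x * Real.exp (u k x)) (ball (0:E2) 1)) ∧
  (∀ k, IntegrableOn (fun x => h₂ k x * Real.exp (-(u k x))) (ball (0:E2) 1)) ∧
  (∃ C : ℝ, 0 < C ∧
    (∀ k, ContDiffOn ℝ 3 (h₁ k) (ball 0 1) ∧ ContDiffOn ℝ 3 (h₂ k) (ball 0 1)) ∧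
    (∀ k, ∀ x ∈ ball (0:E2) 1,
        C⁻¹ ≤ h₁ k x ∧ h₁ k x ≤ C ∧ C⁻¹ ≤ h₂ k x ∧ h₂ k x ≤ C) ∧
    (∀ k, ∀ x ∈ ball (0:E2) 1, ∀ j : ℕ, j ≤ 3 →
        ‖iteratedFDerivWithin ℝ j (h₁ k) (ball 0 1) x‖ ≤ C ∧
        ‖iteratedFDerivWithin ℝ j (h₂ k) (ball 0 1) x‖ ≤ C) ∧
    (∀ k, ∀ x ∈ sphere (0:E2) 1, ∀ y ∈ sphere (0:E2) 1, |u k x - u k y| ≤ C) ∧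
    (∀ k, (∫ x in ball (0:E2) 1, h₁ k x * Real.exp (u k x)) ≤ C) ∧
    (∀ k, (∫ x in ball (0:E2) 1, h₂ k x * Real.exp (-(u k x))) ≤ C)) ∧
  (∀ K : Set E2, IsCompact K → K ⊆ ball 0 1 \ {0} → ∃ CK : ℝ, ∀ k, ∀ x ∈ K, |u k x| ≤ CK) ∧
  (∀ M : ℝ, ∀ᶠ k in atTop, ∃ x ∈ ball (0:E2) 1, M < |u k x|)

/-- `σ` is the iterated limit `lim_{δ→0⁺} lim_{k→∞} F k δ`. -/
def IsBlowUpMass (F : ℕ → ℝ → ℝ) (σ : ℝ) : Prop :=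
  ∃ S : ℝ → ℝ, (∀ δ : ℝ, 0 < δ → δ < 1 → Tendsto (fun k => F k δ) atTop (nhds (S δ))) ∧
    Tendsto S (nhdsWithin 0 (Ioi 0)) (nhds σ)

/-- The properties of the bubbling set `Σ_k` produced by the selection process. -/
def SelectionSet (u : ℕ → E2 → ℝ) (Sk : ℕ → Finset E2) : Prop :=
  (∀ k, (Sk k).Nonempty) ∧
  (∀ ε : ℝ, 0 < ε → ∀ᶠ k in atTop, ∀ x ∈ Sk k, ‖x‖ < ε) ∧
  (∃ C₁ : ℝ, 0 < C₁ ∧ ∀ k, ∀ x ∈ ball (0:E2) 1,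
      |u k x| + 2 * Real.log (infDist x (↑(Sk k) : Set E2)) ≤ C₁)

/-- Convergence in `C²_loc(ℝ²)`. -/
def ConvC2loc (w : ℕ → E2 → ℝ) (v : E2 → ℝ) : Prop :=
  ∀ K : Set E2, IsCompact K → ∀ j : ℕ, j ≤ 2 →
    TendstoUniformlyOn (fun k y => iteratedFDeriv ℝ j (w k) y) (iteratedFDeriv ℝ j v) atTop K

/-- Uniform convergence to `-∞` on every compact subset of `ℝ²`. -/
def TendsNegInfLoc (w : ℕ → E2 → ℝ) : Prop :=
  ∀ K : Set E2, IsCompact K → ∀ M : ℝ, ∀ᶠ k in atTop, ∀ y ∈ K, w k y ≤ -M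

open Real Topology

lemma norm_circ (θ : ℝ) {r : ℝ} (hr : 0 ≤ r) : ‖circ r θ‖ = r := by
  rw [EuclideanSpace.norm_eq, Fin.sum_univ_two]
  change √(‖r * cos θ‖ ^ 2 + ‖r * sin θ‖ ^ 2) = r
  simp only [Real.norm_eq_abs, sq_abs, mul_pow, ← mul_add, cos_sq_add_sin_sq, mul_one,
    sqrt_sq hr]

lemma continuous_circ : Continuous fun p : ℝ × ℝ => circ p.1 p.2 :=
  (PiLp.continuous_toLp 2 _).comp <| continuous_pi fun i => by
    fin_cases i
    · exact continuous_fst.mul (continuous_cos.comp continuous_snd)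
    · exact continuous_fst.mul (continuous_sin.comp continuous_snd)

lemma circ_add_two_pi (r θ : ℝ) : circ r (θ + 2 * π) = circ r θ := by
  simp only [circ, cos_add_two_pi, sin_add_two_pi]

lemma continuous_comp_circ {v : E2 → ℝ} {s : Set E2} (hv : ContinuousOn v s) {r : ℝ}
    (hr : ∀ θ, circ r θ ∈ s) : Continuous fun θ => v (circ r θ) :=
  hv.comp_continuous (continuous_circ.comp (continuous_const.prodMk continuous_id)) hr

lemma circ_mem_ball {r ρ : ℝ} (hr : 0 ≤ r) (hrρ : r < ρ) (θ : ℝ) :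
    circ r θ ∈ ball (0 : E2) ρ := by
  rwa [mem_ball_zero_iff, norm_circ θ hr]

lemma sphAvg_eq_intervalAverage (v : E2 → ℝ) (r : ℝ) :
    sphAvg v r = ⨍ θ in (0 : ℝ)..2 * π, v (circ r θ) := by
  rw [interval_average_eq, sub_zero, smul_eq_mul, sphAvg]

lemma sphAvg_neg (v : E2 → ℝ) (r : ℝ) : sphAvg (fun x => -v x) r = -sphAvg v r := by
  simp only [sphAvg, intervalIntegral.integral_neg, mul_neg]

lemma exp_sphAvg_le {v : E2 → ℝ} {r : ℝ} (hv : Continuous fun θ => v (circ r θ)) :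
    2 * π * exp (sphAvg v r) ≤ ∫ θ in (0 : ℝ)..2 * π, exp (v (circ r θ)) := by
  have h2π : 0 < 2 * π := by positivity
  have hJ := convexOn_exp.map_set_average_le continuous_exp.continuousOn isClosed_univ
    (μ := volume) (t := uIoc 0 (2 * π)) (f := fun θ => v (circ r θ))
    (by simp) (by simp [ENNReal.mul_eq_top]) (ae_of_all _ fun _ => mem_univ _)
    (hv.integrableOn_uIoc) ((continuous_exp.comp hv).integrableOn_uIoc)
  rwa [← sphAvg_eq_intervalAverage, interval_average_eq, sub_zero, smul_eq_mul,
    ← div_eq_inv_mul, le_div_iff₀' h2π] at hJ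

def realProdEquivE2 : ℝ × ℝ ≃ᵐ E2 :=
  MeasurableEquiv.finTwoArrow.symm.trans (MeasurableEquiv.toLp 2 (Fin 2 → ℝ))

lemma measurePreserving_realProdEquivE2 : MeasurePreserving realProdEquivE2 volume volume :=
  (EuclideanSpace.volume_preserving_symm_measurableEquiv_toLp (Fin 2)).symm.comp
    ((volume_preserving_finTwoArrow ℝ).symm _)

lemma realProdEquivE2_polarCoord_symm (p : ℝ × ℝ) :
    realProdEquivE2 (polarCoord.symm p) = circ p.1 p.2 := by
  rw [polarCoord_symm_apply]
  ext i
  fin_cases i <;> rfl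

lemma integral_eq_integral_polarCoord_circ (g : E2 → ℝ) :
    ∫ x, g x = ∫ p in polarCoord.target, p.1 * g (circ p.1 p.2) := by
  rw [← measurePreserving_realProdEquivE2.integral_comp realProdEquivE2.measurableEmbedding,
    ← integral_comp_polarCoord_symm]
  simp only [realProdEquivE2_polarCoord_symm, smul_eq_mul]

lemma setIntegral_annulus_eq {g : E2 → ℝ} {a b : ℝ} (ha : 0 ≤ a)
    (hg : IntegrableOn (fun p : ℝ × ℝ => p.1 * g (circ p.1 p.2)) (Ioo a b ×ˢ Ioo (-π) π)) :
    ∫ x in {x : E2 | ‖x‖ ∈ Ioo a b}, g x =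
      ∫ r in Ioo a b, r * ∫ θ in Ioo (-π) π, g (circ r θ) := by
  have hA : MeasurableSet {x : E2 | ‖x‖ ∈ Ioo a b} :=
    measurableSet_Ioo.preimage continuous_norm.measurable
  have hsub : Ioo a b ×ˢ Ioo (-π) π ⊆ polarCoord.target := by
    rw [polarCoord_target]
    exact prod_mono (fun r hr => ha.trans_lt hr.1) subset_rfl
  rw [← integral_indicator hA, integral_eq_integral_polarCoord_circ]
  have hpolar : ∀ p ∈ polarCoord.target,
      p.1 * ({x : E2 | ‖x‖ ∈ Ioo a b}.indicator g (circ p.1 p.2)) =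
        (Ioo a b ×ˢ Ioo (-π) π).indicator (fun p : ℝ × ℝ => p.1 * g (circ p.1 p.2)) p := by
    rintro ⟨r, θ⟩ hp
    have hθ : θ ∈ Ioo (-π) π := hp.2
    have hnorm : ‖circ r θ‖ = r := norm_circ θ (le_of_lt hp.1)
    by_cases hr : r ∈ Ioo a b
    · rw [indicator_of_mem (by rwa [mem_ofPred_eq, hnorm]), indicator_of_mem (mk_mem_prod hr hθ)]
    · rw [indicator_of_notMem (by rwa [mem_ofPred_eq, hnorm]),
        indicator_of_notMem (fun h => hr h.1), mul_zero]
  rw [setIntegral_congr_fun polarCoord.open_target.measurableSet hpolar,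
    setIntegral_indicator (measurableSet_Ioo.prod measurableSet_Ioo), inter_eq_right.2 hsub,
    Measure.volume_eq_prod, setIntegral_prod _ (by rwa [← Measure.volume_eq_prod])]
  simp only [integral_const_mul]

lemma integrableOn_polar_of_continuousOn {g : E2 → ℝ} {a b : ℝ} (ha : 0 ≤ a)
    (hg : ContinuousOn g (closedBall 0 b)) :
    IntegrableOn (fun p : ℝ × ℝ => p.1 * g (circ p.1 p.2)) (Ioo a b ×ˢ Ioo (-π) π) := by
  refine (ContinuousOn.integrableOn_compact (isCompact_Icc.prod isCompact_Icc) ?_).mono_set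
    (prod_mono Ioo_subset_Icc_self Ioo_subset_Icc_self)
  refine continuous_fst.continuousOn.mul (hg.comp continuous_circ.continuousOn ?_)
  rintro ⟨r, θ⟩ ⟨hr, -⟩
  rw [mem_closedBall_zero_iff, norm_circ θ (ha.trans hr.1)]
  exact hr.2

lemma two_pi_mul_exp_abs_sphAvg_le {u : E2 → ℝ} {r : ℝ}
    (hu : Continuous fun θ => u (circ r θ)) :
    2 * π * exp |sphAvg u r| ≤
      ∫ θ in (0 : ℝ)..2 * π, (exp (u (circ r θ)) + exp (-u (circ r θ))) := by
  have hpos := exp_sphAvg_le hu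
  have hneg := exp_sphAvg_le (v := fun x => -u x) hu.neg
  rw [sphAvg_neg] at hneg
  rw [intervalIntegral.integral_add (f := fun θ => exp (u (circ r θ)))
    (g := fun θ => exp (-u (circ r θ)))
    ((continuous_exp.comp hu).intervalIntegrable _ _)
    ((continuous_exp.comp hu.neg).intervalIntegrable _ _)]
  calc 2 * π * exp |sphAvg u r| ≤ 2 * π * (exp (sphAvg u r) + exp (-sphAvg u r)) :=
        mul_le_mul_of_nonneg_left (exp_abs_le _) (by positivity)
    _ ≤ _ := by linarith

lemma setIntegral_Ioo_comp_circ_eq_intervalIntegral (g : E2 → ℝ) (r : ℝ) :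
    ∫ θ in Ioo (-π) π, g (circ r θ) = ∫ θ in (0 : ℝ)..2 * π, g (circ r θ) := by
  have hper : Function.Periodic (fun θ => g (circ r θ)) (2 * π) := fun θ => by
    simp only [circ_add_two_pi]
  rw [← integral_Ioc_eq_integral_Ioo, ← intervalIntegral.integral_of_le (by linarith [pi_pos]),
    ← zero_add (2 * π), ← hper.intervalIntegral_add_eq (-π) 0]
  ring_nf

lemma mul_log_le_setIntegral_annulus {g : E2 → ℝ} {a b K : ℝ} (ha : 0 < a) (hab : a ≤ b)
    (hg : ContinuousOn g (closedBall 0 b))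
    (hK : ∀ r ∈ Ioo a b, K ≤ r ^ 2 * ∫ θ in Ioo (-π) π, g (circ r θ)) :
    K * log (b / a) ≤ ∫ x in {x : E2 | ‖x‖ ∈ Ioo a b}, g x := by
  have hint := integrableOn_polar_of_continuousOn ha.le hg
  have hradial : IntegrableOn (fun r => r * ∫ θ in Ioo (-π) π, g (circ r θ)) (Ioo a b) := by
    rw [IntegrableOn, Measure.volume_eq_prod, ← Measure.prod_restrict] at hint
    exact (hint.integral_prod_left).congr (ae_of_all _ fun r => integral_const_mul r _)
  have hinv : IntegrableOn (fun r : ℝ => K * r⁻¹) (Ioo a b) :=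
    ((continuousOn_const.mul (continuousOn_inv₀.mono fun r hr => (ha.trans_le hr.1).ne')
      ).integrableOn_compact isCompact_Icc).mono_set Ioo_subset_Icc_self
  calc K * log (b / a) = ∫ r in Ioo a b, K * r⁻¹ := by
        rw [← integral_Ioc_eq_integral_Ioo, ← intervalIntegral.integral_of_le hab,
          intervalIntegral.integral_const_mul, integral_inv_of_pos ha (ha.trans_le hab)]
    _ ≤ ∫ r in Ioo a b, r * ∫ θ in Ioo (-π) π, g (circ r θ) := by
        refine setIntegral_mono_on hinv hradial measurableSet_Ioo fun r hr => ?_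
        have hr0 : 0 < r := ha.trans hr.1
        rw [← div_eq_mul_inv, div_le_iff₀ hr0]
        nlinarith [hK r hr]
    _ = _ := (setIntegral_annulus_eq ha.le hint).symm

lemma exists_mem_Ioo_abs_sphAvg_add_two_log_lt {u g : E2 → ℝ} {c E a b : ℝ} (hc : 0 < c)
    (hE : 0 < E) (hu : ContinuousOn u (ball 0 1)) (hg : ContinuousOn g (ball 0 1))
    (hgi : IntegrableOn g (ball 0 1)) (hgE : ∫ x in ball (0 : E2) 1, g x ≤ E)
    (hug : ∀ x ∈ ball (0 : E2) 1, c * (exp (u x) + exp (-u x)) ≤ g x)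
    (ha : 0 < a) (hab : a < b) (hb : b < 1) :
    ∃ r ∈ Ioo a b, |sphAvg u r| + 2 * log r < log (E / (π * c) / log (b / a)) := by
  set B := log (E / (π * c) / log (b / a))
  have hL : 0 < log (b / a) := log_pos ((one_lt_div ha).2 hab)
  by_contra! hB
  have hcircle : ∀ r ∈ Ioo a b,
      2 * π * c * exp B ≤ r ^ 2 * ∫ θ in Ioo (-π) π, g (circ r θ) := by
    intro r hr
    have hr0 : 0 < r := ha.trans hr.1
    have hball : ∀ θ, circ r θ ∈ ball (0 : E2) 1 := circ_mem_ball hr0.le (hr.2.trans hb)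
    have hur := continuous_comp_circ hu hball
    have hexp : exp B ≤ r ^ 2 * exp |sphAvg u r| :=
      calc exp B ≤ exp (|sphAvg u r| + 2 * log r) := exp_le_exp.2 (hB r hr)
        _ = r ^ 2 * exp |sphAvg u r| := by
          rw [exp_add, two_mul, exp_add, exp_log hr0]
          ring
    have hmono : c * ∫ θ in (0 : ℝ)..2 * π, (exp (u (circ r θ)) + exp (-u (circ r θ))) ≤
        ∫ θ in (0 : ℝ)..2 * π, g (circ r θ) := by
      rw [← intervalIntegral.integral_const_mul]
      refine intervalIntegral.integral_mono_on (by positivity)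
        (Continuous.intervalIntegrable ?_ _ _)
        ((continuous_comp_circ hg hball).intervalIntegrable _ _) fun θ _ => hug _ (hball θ)
      exact continuous_const.mul ((continuous_exp.comp hur).add (continuous_exp.comp hur.neg))
    rw [setIntegral_Ioo_comp_circ_eq_intervalIntegral]
    calc 2 * π * c * exp B ≤ 2 * π * c * (r ^ 2 * exp |sphAvg u r|) := by gcongr
      _ = r ^ 2 * (c * (2 * π * exp |sphAvg u r|)) := by ring
      _ ≤ r ^ 2 * ∫ θ in (0 : ℝ)..2 * π, g (circ r θ) := by
        gcongr
        exact (mul_le_mul_of_nonneg_left (two_pi_mul_exp_abs_sphAvg_le hur) hc.le).trans hmono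
  have hannulus := mul_log_le_setIntegral_annulus ha hab.le
    (hg.mono (closedBall_subset_ball hb)) hcircle
  have hsub : {x : E2 | ‖x‖ ∈ Ioo a b} ⊆ ball 0 1 := fun x hx =>
    mem_ball_zero_iff.2 (hx.2.trans hb)
  have hg0 : 0 ≤ᵐ[volume.restrict (ball (0 : E2) 1)] g :=
    ae_restrict_of_forall_mem measurableSet_ball fun x hx =>
      (by positivity : 0 ≤ c * (exp (u x) + exp (-u x))).trans (hug x hx)
  have hball := setIntegral_mono_set hgi hg0 hsub.eventuallyLE
  have hlhs : 2 * π * c * exp B * log (b / a) = 2 * E := by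
    rw [exp_log (by positivity)]
    field_simp
  linarith

lemma exists_seq_mem_Icc_of_eventually_exists_mem_Ioo {ι : Type*} {f : Filter ι}
    {a b : ι → ℝ} {P : ι → ℝ → Prop} (h : ∀ᶠ k in f, ∃ r ∈ Ioo (a k) (b k), P k r) :
    ∃ l : ι → ℝ, (∀ k, l k ∈ Icc (a k) (max (a k) (b k))) ∧ ∀ᶠ k in f, P k (l k) := by
  classical
  refine ⟨fun k => if hk : ∃ r ∈ Ioo (a k) (b k), P k r then hk.choose else a k,
    fun k => ?_, h.mono fun k hk => ?_⟩
  · dsimp only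
    split_ifs with hk
    · exact ⟨hk.choose_spec.1.1.le, hk.choose_spec.1.2.le.trans (le_max_right _ _)⟩
    · exact ⟨le_rfl, le_max_left _ _⟩
  · simp only [dif_pos hk]
    exact hk.choose_spec.2

lemma tendsto_log_div_atBot {ι : Type*} {f : Filter ι} {L : ι → ℝ} (hL : Tendsto L f atTop)
    {c : ℝ} (hc : 0 < c) : Tendsto (fun k => log (c / L k)) f atBot :=
  tendsto_log_nhdsGT_zero.comp <| tendsto_nhdsWithin_iff.2
    ⟨tendsto_const_nhds.div_atTop hL, (hL.eventually_gt_atTop 0).mono fun _ hk => div_pos hc hk⟩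

lemma tendsto_log_sqrt_div_self_atTop {ι : Type*} {f : Filter ι} {a : ι → ℝ}
    (ha : Tendsto a f (𝓝[>] 0)) : Tendsto (fun k => log (√(a k) / a k)) f atTop := by
  simp only [sqrt_div_self', one_div]
  refine tendsto_log_atTop.comp <| tendsto_inv_nhdsGT_zero.comp <|
    tendsto_nhdsWithin_iff.2 ⟨?_, ?_⟩
  · exact (continuous_sqrt.tendsto' 0 0 sqrt_zero).comp (tendsto_nhds_of_tendsto_nhdsWithin ha)
  · exact (ha.eventually self_mem_nhdsWithin).mono fun k hk => sqrt_pos.2 hk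

lemma BlowUpSetup.exists_abs_sphAvg_add_two_log_lt {u h₁ h₂ : ℕ → E2 → ℝ}
    (hsetup : BlowUpSetup u h₁ h₂) :
    ∃ K > 0, ∀ k {a b : ℝ}, 0 < a → a < b → b < 1 →
      ∃ r ∈ Ioo a b, |sphAvg (u k) r| + 2 * log r < log (K / log (b / a)) := by
  obtain ⟨hu, -, hint₁, hint₂, ⟨C, hC, hh, hbd, -, -, hE₁, hE₂⟩, -, -⟩ := hsetup
  refine ⟨2 * C / (π * C⁻¹), by positivity, fun k a b ha hab hb => ?_⟩
  have hexp := continuous_exp.comp_continuousOn (hu k).continuousOn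
  have hexp_neg := continuous_exp.comp_continuousOn (hu k).continuousOn.neg
  refine exists_mem_Ioo_abs_sphAvg_add_two_log_lt
    (g := fun x => h₁ k x * exp (u k x) + h₂ k x * exp (-u k x)) (inv_pos.2 hC) (by positivity)
    (hu k).continuousOn (((hh k).1.continuousOn.mul hexp).add ((hh k).2.continuousOn.mul hexp_neg))
    ((hint₁ k).add (hint₂ k)) ?_ (fun x hx => ?_) ha hab hb
  · rw [integral_add (hint₁ k) (hint₂ k)]
    linarith [hE₁ k, hE₂ k]
  · obtain ⟨h₁_lb, -, h₂_lb, -⟩ := hbd k x hx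
    rw [mul_add]
    gcongr

theorem exists_fast_decay_average_radius_general (u h₁ h₂ : ℕ → E2 → ℝ)
    (hsetup : BlowUpSetup u h₁ h₂)
    (ε : ℕ → ℝ) (hεpos : ∀ k, 0 < ε k) (hε0 : Tendsto ε atTop (nhds 0)) :
    ∃ l : ℕ → ℝ, Tendsto l atTop (nhds 0) ∧ (∀ k, 2 * ε k ≤ l k) ∧
      Tendsto (fun k => |sphAvg (u k) (l k)| + 2 * Real.log (l k)) atTop atBot := by
  obtain ⟨K, hK, hradius⟩ := hsetup.exists_abs_sphAvg_add_two_log_lt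
  set a : ℕ → ℝ := fun k => 2 * ε k
  have ha : Tendsto a atTop (𝓝[>] 0) := tendsto_nhdsWithin_iff.2
    ⟨by simpa using hε0.const_mul 2, Eventually.of_forall fun k => mul_pos two_pos (hεpos k)⟩
  have hex : ∀ᶠ k in atTop, ∃ r ∈ Ioo (a k) √(a k),
      |sphAvg (u k) r| + 2 * log r < log (K / log (√(a k) / a k)) := by
    filter_upwards [ha.eventually (Ioo_mem_nhdsGT one_pos)] with k ⟨hak, hak1⟩
    exact hradius k hak ((lt_sqrt hak.le).2 (by nlinarith)) ((sqrt_lt' one_pos).2 (by simpa))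
  obtain ⟨l, hl, hlP⟩ := exists_seq_mem_Icc_of_eventually_exists_mem_Ioo hex
  refine ⟨l, ?_, fun k => (hl k).1, tendsto_atBot_mono' _ (hlP.mono fun k hk => hk.le)
    (tendsto_log_div_atBot (tendsto_log_sqrt_div_self_atTop ha) hK)⟩
  have ha0 := tendsto_nhds_of_tendsto_nhdsWithin ha
  refine squeeze_zero (fun k => (mul_pos two_pos (hεpos k)).le.trans (hl k).1)
    (fun k => (hl k).2) ?_
  simpa using ha0.max ((continuous_sqrt.tendsto' 0 0 sqrt_zero).comp ha0)

/-- Lemma 3.2: for every `ε_k → 0` with `Σ_k ⊂ B_{ε_k/2}(0)` there exists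
`l_k → 0`, `l_k ≥ 2ε_k`, such that `|ū_k(l_k)| + 2 log l_k → −∞`. -/
theorem exists_fast_decay_average_radius (u h₁ h₂ : ℕ → E2 → ℝ) (Sk : ℕ → Finset E2)
    (hsetup : BlowUpSetup u h₁ h₂) (hSel : SelectionSet u Sk)
    (ε : ℕ → ℝ) (hεpos : ∀ k, 0 < ε k) (hε0 : Tendsto ε atTop (nhds 0))
    (hSkSub : ∀ k, (↑(Sk k) : Set E2) ⊆ ball (0:E2) (ε k / 2)) :
    ∃ l : ℕ → ℝ, Tendsto l atTop (nhds 0) ∧ (∀ k, 2 * ε k ≤ l k) ∧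
      Tendsto (fun k => |sphAvg (u k) (l k)| + 2 * Real.log (l k)) atTop atBot :=
  exists_fast_decay_average_radius_general u h₁ h₂ hsetup ε hεpos hε0

end
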